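/- arXiv:1006.0159 — 2 statements merged into one kernel-verified Lean document; each statement's English description precedes it below -/
import Mathlib

section
/- Let f : A → B be a ring homomorphism and J an ideal of B. If A ⋈^f J is an elementary divisor ring, then the subring f(A) + J of B is an elementary divisor ring. -/
/-- A commutative ring is an elementary divisor ring if every square matrix is
equivalent to a diagonal matrix via invertible matrices. -/
def IsElementaryDivisorRing (R : Type*) [CommRing R] : Prop :=
  ∀ (n : ℕ) (M : Matrix (Fin n) (Fin n) R),
    ∃ P Q : Matrix (Fin n) (Fin n) R, IsUnit P ∧ IsUnit Q ∧
      ∃ d : Fin n → R, P * M * Q = Matrix.diagonal d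

/-- A commutative ring is Hermite if any pair `a, b` can be written `a = a₁d`,
`b = b₁d` with `Ra₁ + Rb₁ = R`. -/
def IsHermiteRing (R : Type*) [CommRing R] : Prop :=
  ∀ a b : R, ∃ a₁ b₁ d : R, a = a₁ * d ∧ b = b₁ * d ∧ Ideal.span {a₁, b₁} = ⊤

/-- The amalgamation `A ⋈^f J = {(a, f a + j) | a ∈ A, j ∈ J}` as a subring of `A × B`. -/
def amalgamation {A B : Type*} [CommRing A] [CommRing B] (f : A →+* B) (J : Ideal B) :
    Subring (A × B) where
  carrier := {p | p.2 - f p.1 ∈ J}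
  mul_mem' := by
    intro p q hp hq
    have h : (p * q).2 - f (p * q).1
        = p.2 * (q.2 - f q.1) + f q.1 * (p.2 - f p.1) := by
      simp only [Prod.fst_mul, Prod.snd_mul, map_mul]; ring
    show (p * q).2 - f (p * q).1 ∈ J
    rw [h]
    exact J.add_mem (J.mul_mem_left _ hq) (J.mul_mem_left _ hp)
  one_mem' := by simp
  add_mem' := by
    intro p q hp hq
    have h : (p + q).2 - f (p + q).1 = (p.2 - f p.1) + (q.2 - f q.1) := by
      simp only [Prod.fst_add, Prod.snd_add, map_add]; ring
    show (p + q).2 - f (p + q).1 ∈ J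
    rw [h]
    exact J.add_mem hp hq
  zero_mem' := by simp
  neg_mem' := by
    intro p hp
    have h : (-p).2 - f (-p).1 = -(p.2 - f p.1) := by
      simp only [Prod.fst_neg, Prod.snd_neg, map_neg]; ring
    show (-p).2 - f (-p).1 ∈ J
    rw [h]
    exact J.neg_mem hp

/-- The subring `f(A) + J` of `B`. -/
def rangeAddIdeal {A B : Type*} [CommRing A] [CommRing B] (f : A →+* B) (J : Ideal B) :
    Subring B where
  carrier := {b | ∃ a, b - f a ∈ J}
  mul_mem' := by
    rintro b b' ⟨a, ha⟩ ⟨a', ha'⟩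
    refine ⟨a * a', ?_⟩
    have h : b * b' - f (a * a') = b * (b' - f a') + f a' * (b - f a) := by
      simp only [map_mul]; ring
    show b * b' - f (a * a') ∈ J
    rw [h]
    exact J.add_mem (J.mul_mem_left _ ha') (J.mul_mem_left _ ha)
  one_mem' := ⟨1, by simp⟩
  add_mem' := by
    rintro b b' ⟨a, ha⟩ ⟨a', ha'⟩
    refine ⟨a + a', ?_⟩
    have h : b + b' - f (a + a') = (b - f a) + (b' - f a') := by
      simp only [map_add]; ring
    show b + b' - f (a + a') ∈ J
    rw [h]
    exact J.add_mem ha ha'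
  zero_mem' := ⟨0, by simp⟩
  neg_mem' := by
    rintro b ⟨a, ha⟩
    refine ⟨-a, ?_⟩
    have h : -b - f (-a) = -(b - f a) := by simp only [map_neg]; ring
    show -b - f (-a) ∈ J
    rw [h]
    exact J.neg_mem ha

theorem IsElementaryDivisorRing.of_surjective {R S : Type*} [CommRing R] [CommRing S]
    (hR : IsElementaryDivisorRing R) (g : R →+* S) (hg : Function.Surjective g) :
    IsElementaryDivisorRing S := by
  intro n M
  have hlift : (M.map (Function.surjInv hg)).map g = M :=
    Matrix.ext fun i j => Function.surjInv_eq hg (M i j)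
  obtain ⟨P, Q, hP, hQ, d, hd⟩ := hR n (M.map (Function.surjInv hg))
  refine ⟨P.map g, Q.map g, hP.map g.mapMatrix, hQ.map g.mapMatrix, fun i => g (d i), ?_⟩
  rw [← hlift, ← Matrix.map_mul, ← Matrix.map_mul, hd]
  exact Matrix.diagonal_map (map_zero g)

def amalgamation.sndToRangeAddIdeal {A B : Type*} [CommRing A] [CommRing B] (f : A →+* B)
    (J : Ideal B) : amalgamation f J →+* rangeAddIdeal f J :=
  ((RingHom.snd A B).comp (amalgamation f J).subtype).codRestrict _ fun p => ⟨p.1.1, p.2⟩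

theorem amalgamation.sndToRangeAddIdeal_surjective {A B : Type*} [CommRing A] [CommRing B]
    (f : A →+* B) (J : Ideal B) : Function.Surjective (amalgamation.sndToRangeAddIdeal f J) :=
  fun ⟨b, a, ha⟩ => ⟨⟨(a, b), ha⟩, rfl⟩

theorem stmt5 {A B : Type*} [CommRing A] [CommRing B] (f : A →+* B) (J : Ideal B)
    (h : IsElementaryDivisorRing (amalgamation f J)) :
    IsElementaryDivisorRing (rangeAddIdeal f J) :=
  h.of_surjective _ (amalgamation.sndToRangeAddIdeal_surjective f J)
end

section
/- Let A and B be integral domains, f : A → B a non-injective ring homomorphism, and J an ideal of B. Then A ⋈^f J is an elementary divisor ring if and only if either (J = 0 and A is an elementary divisor ring) or (J = B and both A and B are elementary divisor rings). -/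
section ElementaryDivisor

open Matrix

variable {R S : Type*} [CommRing R] [CommRing S]

namespace IsElementaryDivisorRing

theorem of_surjective_s10 (g : R →+* S) (hg : Function.Surjective g)
    (h : IsElementaryDivisorRing R) : IsElementaryDivisorRing S := by
  intro n M
  choose N hN using fun i j => hg (M i j)
  obtain ⟨P, Q, hP, hQ, d, hd⟩ := h n (of N)
  refine ⟨g.mapMatrix P, g.mapMatrix Q, hP.map _, hQ.map _, fun i => g (d i), ?_⟩
  have hM : g.mapMatrix (of N) = M := by ext i j; exact hN i j
  rw [← hM, ← map_mul, ← map_mul, hd, RingHom.mapMatrix_apply, diagonal_map g.map_zero]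

theorem of_ringEquiv (e : R ≃+* S) (h : IsElementaryDivisorRing R) :
    IsElementaryDivisorRing S :=
  of_surjective_s10 e.toRingHom e.surjective h

theorem isBezout (h : IsElementaryDivisorRing R) : IsBezout R := by
  refine IsBezout.iff_span_pair_isPrincipal.mpr fun a b => ?_
  obtain ⟨P, Q, hP, hQ, d, hd⟩ := h 2 !![a, b; 0, 0]
  -- The `i`-th row of `P * M * Q` is `P i 0 • w`; since the first column of `P` is unimodular,
  -- `w 0` and `w 1` are both multiples of `w 0 + w 1`, and `![a, b] = w ᵥ* Q⁻¹`.
  set w : Fin 2 → R := ![a, b] ᵥ* Q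
  have hrow : ∀ i t, P i 0 * w t = diagonal d i t := by
    intro i t
    rw [← hd]
    simp only [w, vecMul, dotProduct, Fin.sum_univ_two, mul_apply, of_apply, cons_val',
      cons_val_zero, cons_val_one, cons_val_fin_one, mul_zero, add_zero]
    ring
  have h01 : P 0 0 * w 1 = 0 := by simpa using hrow 0 1
  have h10 : P 1 0 * w 0 = 0 := by simpa using hrow 1 0
  obtain ⟨s, t, hst⟩ : ∃ s t, s * P 0 0 + t * P 1 0 = 1 := by
    have hinv := nonsing_inv_mul P ((isUnit_iff_isUnit_det P).mp hP)
    refine ⟨P⁻¹ 0 0, P⁻¹ 0 1, ?_⟩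
    simpa [mul_apply, Fin.sum_univ_two] using congrFun (congrFun hinv 0) 0
  have hab : w ᵥ* Q⁻¹ = ![a, b] := by
    rw [vecMul_vecMul, mul_nonsing_inv Q ((isUnit_iff_isUnit_det Q).mp hQ),
      vecMul_one]
  refine ⟨w 0 + w 1, le_antisymm ?_ ?_⟩
  · have hw : ∀ t, w t ∈ Ideal.span {w 0 + w 1} := by
      refine Fin.forall_fin_two.mpr ⟨?_, ?_⟩ <;> refine Ideal.mem_span_singleton'.mpr ?_
      · exact ⟨s * P 0 0, by linear_combination w 0 * hst - t * h10 + s * h01⟩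
      · exact ⟨t * P 1 0, by linear_combination w 1 * hst + t * h10 - s * h01⟩
    have hQw : ∀ t, (w ᵥ* Q⁻¹) t ∈ Ideal.span {w 0 + w 1} := fun t => by
      simpa [vecMul, dotProduct, Fin.sum_univ_two] using
        add_mem (Ideal.mul_mem_right _ _ (hw 0)) (Ideal.mul_mem_right _ _ (hw 1))
    rw [hab] at hQw
    rw [Ideal.span_le, Set.insert_subset_iff, Set.singleton_subset_iff]
    exact ⟨hQw 0, hQw 1⟩
  · rw [Ideal.span_singleton_le_iff_mem, Ideal.mem_span_pair]
    refine ⟨Q 0 0 + Q 0 1, Q 1 0 + Q 1 1, ?_⟩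
    simp only [w, vecMul, dotProduct, Fin.sum_univ_two, cons_val_zero, cons_val_one,
      cons_val_fin_one]
    ring

end IsElementaryDivisorRing

end ElementaryDivisor

section Product

variable {A B : Type*} [CommRing A] [CommRing B]

noncomputable def matrixProdRingEquiv (n : Type*) [Fintype n] [DecidableEq n] :
    Matrix n n (A × B) ≃+* Matrix n n A × Matrix n n B :=
  RingEquiv.ofBijective ((RingHom.fst A B).mapMatrix.prod (RingHom.snd A B).mapMatrix)
    ⟨fun X Y h => by
      ext i j
      · exact congrFun (congrFun (congrArg Prod.fst h) i) j
      · exact congrFun (congrFun (congrArg Prod.snd h) i) j,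
    fun XY => ⟨Matrix.of fun i j => (XY.1 i j, XY.2 i j), rfl⟩⟩

theorem IsElementaryDivisorRing.prod (hA : IsElementaryDivisorRing A)
    (hB : IsElementaryDivisorRing B) : IsElementaryDivisorRing (A × B) := by
  intro n M
  let e := matrixProdRingEquiv (A := A) (B := B) (Fin n)
  obtain ⟨P₁, Q₁, hP₁, hQ₁, d₁, h₁⟩ := hA n (e M).1
  obtain ⟨P₂, Q₂, hP₂, hQ₂, d₂, h₂⟩ := hB n (e M).2
  refine ⟨e.symm (P₁, P₂), e.symm (Q₁, Q₂), (Prod.isUnit_iff.mpr ⟨hP₁, hP₂⟩).map e.symm,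
    (Prod.isUnit_iff.mpr ⟨hQ₁, hQ₂⟩).map e.symm, fun i => (d₁ i, d₂ i), e.injective ?_⟩
  rw [map_mul, map_mul, e.apply_symm_apply, e.apply_symm_apply]
  ext1
  · exact h₁.trans (Matrix.diagonal_map (f := Prod.fst) (d := fun i => (d₁ i, d₂ i)) rfl).symm
  · exact h₂.trans (Matrix.diagonal_map (f := Prod.snd) (d := fun i => (d₁ i, d₂ i)) rfl).symm

end Product

section Amalgamation

variable {A B : Type*} [CommRing A] [CommRing B] (f : A →+* B)

theorem mem_amalgamation {J : Ideal B} {p : A × B} : p ∈ amalgamation f J ↔ p.2 - f p.1 ∈ J :=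
  Iff.rfl

noncomputable def amalgamationBotEquiv : A ≃+* amalgamation f ⊥ :=
  RingEquiv.ofBijective
    (((RingHom.id A).prod f).codRestrict _ fun a => by simp [mem_amalgamation])
    ⟨fun a a' h => congrArg (fun p : amalgamation f ⊥ => (p : A × B).1) h,
    fun p => ⟨(p : A × B).1, Subtype.ext <| Prod.ext rfl
      (sub_eq_zero.mp (Ideal.mem_bot.mp ((mem_amalgamation f).mp p.2))).symm⟩⟩

noncomputable def amalgamationTopEquiv : amalgamation f ⊤ ≃+* A × B :=
  (RingEquiv.subringCongr <| eq_top_iff.mpr fun _ _ =>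
    (mem_amalgamation f).mpr Submodule.mem_top).trans Subring.topEquiv

theorem not_isBezout_amalgamation [IsDomain A] [IsDomain B] (hf : ¬ Function.Injective f)
    {J : Ideal B} (hbot : J ≠ ⊥) (htop : J ≠ ⊤) : ¬ IsBezout (amalgamation f J) := by
  intro hR
  obtain ⟨a, hfa, ha⟩ : ∃ a, f a = 0 ∧ a ≠ 0 := by
    simpa [injective_iff_map_eq_zero] using hf
  obtain ⟨j, hjJ, hj⟩ := Submodule.exists_mem_ne_zero_of_ne_bot hbot
  let x : amalgamation f J := ⟨(a, 0), by simp [mem_amalgamation, hfa]⟩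
  let y : amalgamation f J := ⟨(0, j), by simpa [mem_amalgamation]⟩
  obtain ⟨z, hz⟩ := (IsBezout.iff_span_pair_isPrincipal.mp hR x y).principal
  rw [Ideal.submodule_span_eq] at hz
  have hx : x ∈ Ideal.span {z} := hz ▸ Ideal.subset_span (by simp)
  have hy : y ∈ Ideal.span {z} := hz ▸ Ideal.subset_span (by simp)
  have hzxy : z ∈ Ideal.span {x, y} := hz ▸ Ideal.mem_span_singleton_self z
  -- `z.1 ≠ 0` as `(a, 0) ∈ (z)`, so `(0, j) = s * z` forces `s.1 = 0`, i.e. `s.2 ∈ J`;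
  -- but `z.2` is a multiple of `j`, so `s.2` is a unit.
  obtain ⟨r, hr⟩ := Ideal.mem_span_singleton'.mp hx
  obtain ⟨s, hs⟩ := Ideal.mem_span_singleton'.mp hy
  obtain ⟨u, v, huv⟩ := Ideal.mem_span_pair.mp hzxy
  have hr₁ : (r : A × B).1 * (z : A × B).1 = a := congrArg (fun p : amalgamation f J => p.1.1) hr
  have hs₁ : (s : A × B).1 * (z : A × B).1 = 0 := congrArg (fun p : amalgamation f J => p.1.1) hs
  have hs₂ : (s : A × B).2 * (z : A × B).2 = j := congrArg (fun p : amalgamation f J => p.1.2) hs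
  have hz₂ : (u : A × B).2 * 0 + (v : A × B).2 * j = (z : A × B).2 :=
    congrArg (fun p : amalgamation f J => p.1.2) huv
  have hs₁0 : (s : A × B).1 = 0 :=
    (mul_eq_zero.mp hs₁).resolve_right (right_ne_zero_of_mul (hr₁ ▸ ha))
  have hsJ : (s : A × B).2 ∈ J := by
    simpa only [hs₁0, map_zero, sub_zero] using (mem_amalgamation f).mp s.2
  have hsv : (s : A × B).2 * (v : A × B).2 = 1 :=
    mul_right_cancel₀ hj (by linear_combination (s : A × B).2 * hz₂ + hs₂)
  exact htop (J.eq_top_of_isUnit_mem hsJ (.of_mul_eq_one _ hsv))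

end Amalgamation

theorem stmt10 {A B : Type*} [CommRing A] [IsDomain A] [CommRing B] [IsDomain B]
    (f : A →+* B) (hf : ¬ Function.Injective f) (J : Ideal B) :
    IsElementaryDivisorRing (amalgamation f J) ↔
      (J = ⊥ ∧ IsElementaryDivisorRing A) ∨
      (J = ⊤ ∧ IsElementaryDivisorRing A ∧ IsElementaryDivisorRing B) := by
  constructor
  · intro h
    by_cases hbot : J = ⊥
    · subst hbot
      exact Or.inl ⟨rfl, h.of_ringEquiv (amalgamationBotEquiv f).symm⟩
    by_cases htop : J = ⊤
    · subst htop
      have hprod := h.of_ringEquiv (amalgamationTopEquiv f)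
      exact Or.inr ⟨rfl, hprod.of_surjective_s10 (RingHom.fst A B) Prod.fst_surjective,
        hprod.of_surjective_s10 (RingHom.snd A B) Prod.snd_surjective⟩
    exact absurd h.isBezout (not_isBezout_amalgamation f hf hbot htop)
  · rintro (⟨rfl, hA⟩ | ⟨rfl, hA, hB⟩)
    · exact hA.of_ringEquiv (amalgamationBotEquiv f)
    · exact (hA.prod hB).of_ringEquiv (amalgamationTopEquiv f).symm
end
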